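/- arXiv:1410.3445 — 2 statements merged into one kernel-verified Lean document; each statement's English description precedes it below -/
import Mathlib

section
/- Let X and Y be complex Banach spaces, let c > 0, φ ∈ (0, π/2), 0 ≤ μ < 1, C₀ ≥ 0, and t ≥ 0. Let g : ℝ → X be continuously differentiable, and set a(s,t) := ∫_0^t e^{s(t−τ)} g'(τ) dτ ∈ X. Let F be a continuous function from the ray { ρ·e^{i(π−φ)} : ρ ≥ c } to the space of bounded linear operators X → Y, satisfying ‖F(ρ·e^{i(π−φ)})‖ ≤ C₀·ρ^μ for all ρ ≥ c. Then the function ρ ↦ ρ^{−1} F(ρ·e^{i(π−φ)}) ( a(ρ·e^{i(π−φ)}, t) ) is Bochner integrable on [c, ∞), and ‖ ∫_c^∞ ρ^{−1} F(ρ·e^{i(π−φ)}) ( a(ρ·e^{i(π−φ)}, t) ) dρ ‖ ≤ C₀ · ( max_{0≤τ≤t} ‖g'(τ)‖ ) · c^{μ−1} / ((1−μ)·cos φ). -/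
open MeasureTheory Real Set

/-- `a(s,t) = ∫_0^t e^{s(t-τ)} g'(τ) dτ`. -/
noncomputable def aInt {X : Type*} [NormedAddCommGroup X] [NormedSpace ℂ X]
    (g : ℝ → X) (s : ℂ) (t : ℝ) : X :=
  ∫ τ in (0:ℝ)..t, Complex.exp (s * (t - τ)) • deriv g τ

/-! On the ray `s = ρ e^{i(π - φ)}` one has `Re s = -ρ cos φ < 0`, so `e^{s(t-τ)}` decays and
`‖a(s,t)‖ ≤ max ‖g'‖ / (ρ cos φ)`. Together with `‖F(s)‖ ≤ C₀ ρ^μ` the integrand is `O(ρ^{μ-2})`,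
which is integrable on `[c, ∞)` with integral `c^{μ-1} / (1 - μ)` because `μ < 1`. -/

theorem integral_exp_mul_sub_le {a : ℝ} (ha : a < 0) (t : ℝ) :
    ∫ τ in (0:ℝ)..t, exp (a * (t - τ)) ≤ (-a)⁻¹ := by
  have hsub : ∀ τ, a * (t - τ) = a * t - a * τ := fun τ => by ring
  simp_rw [hsub]
  rw [intervalIntegral.integral_comp_sub_mul (fun x => exp x) ha.ne, integral_exp, smul_eq_mul]
  simp only [mul_zero, sub_zero, sub_self, exp_zero]
  rw [show a⁻¹ * (exp (a * t) - 1) = (-a)⁻¹ * (1 - exp (a * t)) by rw [inv_neg]; ring]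
  exact mul_le_of_le_one_right (inv_nonneg.2 (neg_nonneg.2 ha.le)) (by linarith [exp_pos (a * t)])

section aInt

variable {X : Type*} [NormedAddCommGroup X] [NormedSpace ℂ X] {g : ℝ → X}

theorem norm_aInt_le {s : ℂ} {t M : ℝ} (hs : s.re < 0) (ht : 0 ≤ t)
    (hM : ∀ τ ∈ Icc 0 t, ‖deriv g τ‖ ≤ M) :
    ‖aInt g s t‖ ≤ M / -s.re := by
  have hM0 : 0 ≤ M := (norm_nonneg _).trans (hM 0 ⟨le_rfl, ht⟩)
  have hpt : ∀ τ ∈ Ioc 0 t,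
      ‖Complex.exp (s * (t - τ)) • deriv g τ‖ ≤ M * exp (s.re * (t - τ)) := by
    intro τ hτ
    rw [norm_smul, Complex.norm_exp, mul_comm]
    gcongr
    · exact hM τ (Ioc_subset_Icc_self hτ)
    · simp
  calc ‖aInt g s t‖ ≤ ∫ τ in (0:ℝ)..t, M * exp (s.re * (t - τ)) :=
        intervalIntegral.norm_integral_le_of_norm_le ht (ae_of_all _ hpt)
          ((by fun_prop : Continuous fun τ => M * exp (s.re * (t - τ))).intervalIntegrable _ _)
    _ = M * ∫ τ in (0:ℝ)..t, exp (s.re * (t - τ)) := intervalIntegral.integral_const_mul _ _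
    _ ≤ M * (-s.re)⁻¹ := by gcongr; exact integral_exp_mul_sub_le hs t
    _ = M / -s.re := rfl

theorem continuous_aInt (hg : Continuous (deriv g)) (t : ℝ) : Continuous fun s => aInt g s t :=
  intervalIntegral.continuous_parametric_intervalIntegral_of_continuous' (by fun_prop) _ _

theorem re_ofReal_mul_exp_I_pi_sub (ρ φ : ℝ) :
    ((ρ : ℂ) * Complex.exp (Complex.I * ((π : ℝ) - φ))).re = -(ρ * cos φ) := by
  rw [Complex.re_ofReal_mul, ← Complex.ofReal_sub, mul_comm Complex.I,
    Complex.exp_ofReal_mul_I_re, cos_pi_sub]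
  ring

theorem norm_aInt_ofReal_mul_exp_I_pi_sub_le {ρ φ t M : ℝ} (hρ : 0 < ρ) (hφ : 0 < cos φ)
    (ht : 0 ≤ t) (hM : ∀ τ ∈ Icc 0 t, ‖deriv g τ‖ ≤ M) :
    ‖aInt g ((ρ : ℂ) * Complex.exp (Complex.I * ((π : ℝ) - φ))) t‖ ≤ M / (ρ * cos φ) := by
  have hs := re_ofReal_mul_exp_I_pi_sub ρ φ
  have hneg : ((ρ : ℂ) * Complex.exp (Complex.I * ((π : ℝ) - φ))).re < 0 := by
    rw [hs]; exact neg_neg_of_pos (mul_pos hρ hφ)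
  simpa only [hs, neg_neg] using norm_aInt_le hneg ht hM

end aInt

theorem norm_inv_smul_apply_le_rpow {X Y : Type*} [NormedAddCommGroup X] [NormedSpace ℂ X]
    [NormedAddCommGroup Y] [NormedSpace ℂ Y] (A : X →L[ℂ] Y) {x : X} {ρ C M r μ : ℝ}
    (hρ : 0 < ρ) (hA : ‖A‖ ≤ C * ρ ^ μ) (hx : ‖x‖ ≤ M / (ρ * r)) :
    ‖ρ⁻¹ • A x‖ ≤ C * M / r * ρ ^ (μ - 2) :=
  calc ‖ρ⁻¹ • A x‖ ≤ ρ⁻¹ * (C * ρ ^ μ * (M / (ρ * r))) := by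
        rw [norm_smul, norm_inv, norm_of_nonneg hρ.le]
        gcongr
        exact A.le_of_opNorm_le_of_le hA hx
    _ = C * M / r * ρ ^ (μ - 2) := by
        rw [rpow_sub hρ, rpow_two]
        field_simp

section RpowTail

variable {E : Type*} [NormedAddCommGroup E] {f : ℝ → E} {c K p : ℝ}

theorem integrableOn_Ici_const_mul_rpow (hc : 0 < c) (hp : p < -1) :
    IntegrableOn (fun ρ : ℝ => K * ρ ^ p) (Ici c) := by
  rw [IntegrableOn, Measure.restrict_congr_set Ioi_ae_eq_Ici.symm]
  exact (integrableOn_Ioi_rpow_of_lt hp hc).const_mul K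

theorem integrableOn_Ici_of_norm_le_rpow (hc : 0 < c) (hp : p < -1)
    (hf : AEStronglyMeasurable f (volume.restrict (Ici c)))
    (hbound : ∀ ρ ∈ Ici c, ‖f ρ‖ ≤ K * ρ ^ p) : IntegrableOn f (Ici c) :=
  (integrableOn_Ici_const_mul_rpow hc hp).mono' hf
    ((ae_restrict_iff' measurableSet_Ici).2 (ae_of_all _ hbound))

theorem norm_setIntegral_Ici_le_of_norm_le_rpow [NormedSpace ℝ E] (hc : 0 < c) (hp : p < -1)
    (hbound : ∀ ρ ∈ Ici c, ‖f ρ‖ ≤ K * ρ ^ p) :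
    ‖∫ ρ in Ici c, f ρ‖ ≤ K * (c ^ (p + 1) / -(p + 1)) :=
  calc ‖∫ ρ in Ici c, f ρ‖ ≤ ∫ ρ in Ici c, K * ρ ^ p :=
        norm_integral_le_of_norm_le (integrableOn_Ici_const_mul_rpow hc hp)
          ((ae_restrict_iff' measurableSet_Ici).2 (ae_of_all _ hbound))
    _ = K * (c ^ (p + 1) / -(p + 1)) := by
        rw [setIntegral_congr_set Ioi_ae_eq_Ici.symm, integral_const_mul,
          integral_Ioi_rpow_of_lt hp hc, neg_div, div_neg]

end RpowTail

theorem stmt10_general {X Y : Type*} [NormedAddCommGroup X] [NormedSpace ℂ X]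
    [NormedAddCommGroup Y] [NormedSpace ℂ Y]
    (c : ℝ) (hc : 0 < c) (φ : ℝ) (hφ : φ ∈ Set.Ioo 0 (π / 2))
    (μ : ℝ) (hμ1 : μ < 1) (C₀ : ℝ) (t : ℝ) (ht : 0 ≤ t)
    (g : ℝ → X) (hg : ContDiff ℝ 1 g)
    (F : ℂ → X →L[ℂ] Y)
    (hFcont : ContinuousOn F
      {z : ℂ | ∃ ρ : ℝ, c ≤ ρ ∧ z = (ρ : ℂ) * Complex.exp (Complex.I * ((π : ℝ) - φ))})
    (hFbound : ∀ ρ : ℝ, c ≤ ρ →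
      ‖F ((ρ : ℂ) * Complex.exp (Complex.I * ((π : ℝ) - φ)))‖ ≤ C₀ * ρ ^ μ) :
    IntegrableOn (fun ρ : ℝ =>
        ρ⁻¹ • F ((ρ : ℂ) * Complex.exp (Complex.I * ((π : ℝ) - φ)))
          (aInt g ((ρ : ℂ) * Complex.exp (Complex.I * ((π : ℝ) - φ))) t))
      (Set.Ici c)
    ∧ ‖∫ ρ in Set.Ici c,
          ρ⁻¹ • F ((ρ : ℂ) * Complex.exp (Complex.I * ((π : ℝ) - φ)))
            (aInt g ((ρ : ℂ) * Complex.exp (Complex.I * ((π : ℝ) - φ))) t)‖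
        ≤ C₀ * (sSup ((fun τ => ‖deriv g τ‖) '' Set.Icc 0 t)) * c ^ (μ - 1)
            / ((1 - μ) * Real.cos φ) := by
  have hcos : 0 < cos φ := cos_pos_of_mem_Ioo ⟨by linarith [hφ.1, pi_pos], hφ.2⟩
  set z : ℝ → ℂ := fun ρ => (ρ : ℂ) * Complex.exp (Complex.I * ((π : ℝ) - φ))
  set M := sSup ((fun τ => ‖deriv g τ‖) '' Icc 0 t)
  have hdg : Continuous (deriv g) := hg.continuous_deriv le_rfl
  have hM : ∀ τ ∈ Icc 0 t, ‖deriv g τ‖ ≤ M := fun τ hτ =>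
    le_csSup (isCompact_Icc.image hdg.norm).bddAbove ⟨τ, hτ, rfl⟩
  have hbound : ∀ ρ ∈ Ici c,
      ‖ρ⁻¹ • F (z ρ) (aInt g (z ρ) t)‖ ≤ C₀ * M / cos φ * ρ ^ (μ - 2) := fun ρ hρ =>
    norm_inv_smul_apply_le_rpow _ (hc.trans_le hρ) (hFbound ρ hρ)
      (norm_aInt_ofReal_mul_exp_I_pi_sub_le (hc.trans_le hρ) hcos ht hM)
  have hcont : ContinuousOn (fun ρ : ℝ => ρ⁻¹ • F (z ρ) (aInt g (z ρ) t)) (Ici c) :=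
    (continuousOn_inv₀.mono fun ρ hρ => (hc.trans_le hρ).ne').smul
      ((hFcont.comp (by fun_prop) fun ρ hρ => ⟨ρ, hρ, rfl⟩).clm_apply
        ((continuous_aInt hdg t).comp (by fun_prop)).continuousOn)
  have hp : μ - 2 < -1 := by linarith
  refine ⟨integrableOn_Ici_of_norm_le_rpow hc hp (hcont.aestronglyMeasurable measurableSet_Ici)
    hbound, (norm_setIntegral_Ici_le_of_norm_le_rpow hc hp hbound).trans_eq ?_⟩
  have h1μ : 1 - μ ≠ 0 := by linarith
  rw [show μ - 2 + 1 = μ - 1 by ring, show -(μ - 1) = 1 - μ by ring]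
  field_simp

theorem stmt10 {X Y : Type*} [NormedAddCommGroup X] [NormedSpace ℂ X] [CompleteSpace X]
    [NormedAddCommGroup Y] [NormedSpace ℂ Y] [CompleteSpace Y]
    (c : ℝ) (hc : 0 < c) (φ : ℝ) (hφ : φ ∈ Set.Ioo 0 (π / 2))
    (μ : ℝ) (hμ0 : 0 ≤ μ) (hμ1 : μ < 1) (C₀ : ℝ) (hC₀ : 0 ≤ C₀) (t : ℝ) (ht : 0 ≤ t)
    (g : ℝ → X) (hg : ContDiff ℝ 1 g)
    (F : ℂ → X →L[ℂ] Y)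
    (hFcont : ContinuousOn F
      {z : ℂ | ∃ ρ : ℝ, c ≤ ρ ∧ z = (ρ : ℂ) * Complex.exp (Complex.I * ((π : ℝ) - φ))})
    (hFbound : ∀ ρ : ℝ, c ≤ ρ →
      ‖F ((ρ : ℂ) * Complex.exp (Complex.I * ((π : ℝ) - φ)))‖ ≤ C₀ * ρ ^ μ) :
    IntegrableOn (fun ρ : ℝ =>
        ρ⁻¹ • F ((ρ : ℂ) * Complex.exp (Complex.I * ((π : ℝ) - φ)))
          (aInt g ((ρ : ℂ) * Complex.exp (Complex.I * ((π : ℝ) - φ))) t))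
      (Set.Ici c)
    ∧ ‖∫ ρ in Set.Ici c,
          ρ⁻¹ • F ((ρ : ℂ) * Complex.exp (Complex.I * ((π : ℝ) - φ)))
            (aInt g ((ρ : ℂ) * Complex.exp (Complex.I * ((π : ℝ) - φ))) t)‖
        ≤ C₀ * (sSup ((fun τ => ‖deriv g τ‖) '' Set.Icc 0 t)) * c ^ (μ - 1)
            / ((1 - μ) * Real.cos φ) :=
  stmt10_general c hc φ hφ μ hμ1 C₀ t ht g hg F hFcont hFbound
end

section
/- Define p_∞ : ℝ² → ℝ² by p_∞(x) := x / (2π(1+|x|²)) and the weight ρ : ℝ² → ℝ by ρ(x) := 1 / ( (1 + (1/2)·log(1+|x|²)) · √(1+|x|²) ). Then for each ℓ ∈ {1,2}: (i) the function x ↦ ρ(x)·(p_∞(x)·e_ℓ) belongs to L²(ℝ²); and (ii) the gradient x ↦ ∇(p_∞·e_ℓ)(x) belongs to L²(ℝ²; ℝ²). That is, the components of p_∞ belong to the weighted Sobolev space W(ℝ²) := { u : ℝ² → ℝ : ρu ∈ L²(ℝ²), ∇u ∈ L²(ℝ²) }. -/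
open Real MeasureTheory

/-- The first-order term at infinity `p_∞(x) = x / (2π (1 + |x|²))`. -/
noncomputable def pInf (x : EuclideanSpace ℝ (Fin 2)) : EuclideanSpace ℝ (Fin 2) :=
  (1 / (2 * π * (1 + ‖x‖ ^ 2))) • x

/-- The weight `ρ(x) = 1 / ((1 + (1/2) log(1 + |x|²)) √(1 + |x|²))`. -/
noncomputable def wght (x : EuclideanSpace ℝ (Fin 2)) : ℝ :=
  1 / ((1 + (1 / 2 : ℝ) * Real.log (1 + ‖x‖ ^ 2)) * Real.sqrt (1 + ‖x‖ ^ 2))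

/-!
Both functions are dominated pointwise by `(1 + |x|²)⁻¹`, which lies in `L²(ℝ²)` because
`(1 + |x|²)⁻²` is integrable in every dimension below `4`. For the weighted function the
logarithm in `ρ` is not needed: `ρ(x) ≤ (1 + |x|²)^(-1/2)` and `|p_∞(x)| ≤ |x| / (2π (1 + |x|²))`.
For the gradient, the derivative of `x ↦ (1 + |x|²)⁻¹ x` has operator norm at most
`3 (1 + |x|²)⁻¹`, and `3 ≤ 2π`.
-/

lemma le_sqrt_one_add_sq (a : ℝ) : a ≤ √(1 + a ^ 2) :=
  Real.le_sqrt_of_sq_le (by linarith)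

section InnerProductSpace

variable {E : Type*} [NormedAddCommGroup E] [InnerProductSpace ℝ E]

lemma norm_fderiv_inv_one_add_norm_sq_smul_le (x : E) :
    ‖fderiv ℝ (fun y : E => (1 + ‖y‖ ^ 2)⁻¹ • y) x‖ ≤ 3 * (1 + ‖x‖ ^ 2)⁻¹ := by
  set q := 1 + ‖x‖ ^ 2
  have hq : 0 < q := by positivity
  have hc : HasFDerivAt (fun y : E => (1 + ‖y‖ ^ 2)⁻¹)
      (-(q ^ 2)⁻¹ • (2 : ℕ) • innerSL ℝ x) x :=
    (hasDerivAt_inv hq.ne').comp_hasFDerivAt x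
      ((hasStrictFDerivAt_norm_sq x).hasFDerivAt.const_add 1)
  have hφ : HasFDerivAt (fun y : E => (1 + ‖y‖ ^ 2)⁻¹ • y)
      (q⁻¹ • ContinuousLinearMap.id ℝ E + (-(q ^ 2)⁻¹ • (2 : ℕ) • innerSL ℝ x).smulRight x) x :=
    hc.smul (hasFDerivAt_id x)
  rw [hφ.fderiv]
  have hx : ‖x‖ ^ 2 ≤ q := by simp [q]
  calc _ ≤ q⁻¹ * 1 + (q ^ 2)⁻¹ * (2 * ‖x‖) * ‖x‖ := by
        refine (norm_add_le _ _).trans (add_le_add ?_ ?_)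
        · rw [norm_smul, Real.norm_of_nonneg (by positivity)]
          gcongr
          exact ContinuousLinearMap.norm_id_le
        · rw [ContinuousLinearMap.norm_smulRight_apply, norm_smul, norm_neg,
            Real.norm_of_nonneg (by positivity)]
          gcongr
          exact norm_nsmul_le.trans (by rw [innerSL_apply_norm]; norm_num)
    _ = q⁻¹ + 2 * (‖x‖ ^ 2 / q) * q⁻¹ := by field_simp
    _ ≤ q⁻¹ + 2 * 1 * q⁻¹ := by gcongr; exact div_le_one_of_le₀ hx hq.le
    _ = 3 * q⁻¹ := by ring

lemma norm_gradient [CompleteSpace E] (f : E → ℝ) (x : E) : ‖gradient f x‖ = ‖fderiv ℝ f x‖ :=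
  (InnerProductSpace.toDual ℝ E).symm.norm_map _

variable [MeasurableSpace E] [BorelSpace E]

lemma measurable_gradient [CompleteSpace E] (f : E → ℝ) : Measurable (gradient f) :=
  (InnerProductSpace.toDual ℝ E).symm.continuous.measurable.comp (measurable_fderiv ℝ f)

lemma memLp_two_inv_one_add_norm_sq [FiniteDimensional ℝ E] (μ : Measure E)
    [μ.IsAddHaarMeasure] (hE : Module.finrank ℝ E < 4) :
    MemLp (fun x : E => (1 + ‖x‖ ^ 2)⁻¹) 2 μ := by
  refine (memLp_two_iff_integrable_sq (by fun_prop)).2 ?_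
  refine (integrable_rpow_neg_one_add_norm_sq (μ := μ) (r := 4) (by exact_mod_cast hE)).congr
    (Filter.Eventually.of_forall fun x => ?_)
  change (1 + ‖x‖ ^ 2) ^ (-4 / 2 : ℝ) = ((1 + ‖x‖ ^ 2)⁻¹) ^ 2
  rw [show (-4 : ℝ) / 2 = -(2 : ℕ) by norm_num, Real.rpow_neg (by positivity),
    Real.rpow_natCast, inv_pow]

end InnerProductSpace

local notation "ℝ²" => EuclideanSpace ℝ (Fin 2)

lemma inv_two_pi_le_one : (2 * π)⁻¹ ≤ 1 :=
  inv_le_one_of_one_le₀ (by linarith [pi_gt_three])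

lemma pInf_eq_smul (x : ℝ²) : pInf x = (2 * π)⁻¹ • ((1 + ‖x‖ ^ 2)⁻¹ • x) := by
  rw [pInf, smul_smul, one_div, mul_inv]

lemma abs_wght_le (x : ℝ²) : |wght x| ≤ (√(1 + ‖x‖ ^ 2))⁻¹ := by
  have hlog : 0 ≤ log (1 + ‖x‖ ^ 2) := Real.log_nonneg (by linarith [sq_nonneg ‖x‖])
  rw [wght, one_div, abs_of_nonneg (by positivity)]
  exact inv_anti₀ (by positivity) (le_mul_of_one_le_left (sqrt_nonneg _) (by linarith))

lemma abs_wght_mul_pInf_apply_le (x : ℝ²) (ℓ : Fin 2) :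
    |wght x * pInf x ℓ| ≤ (1 + ‖x‖ ^ 2)⁻¹ := by
  have hx : (√(1 + ‖x‖ ^ 2))⁻¹ * ‖x‖ ≤ 1 :=
    inv_mul_le_one_of_le₀ (le_sqrt_one_add_sq ‖x‖) (sqrt_nonneg _)
  calc |wght x * pInf x ℓ| ≤ (√(1 + ‖x‖ ^ 2))⁻¹ * ‖pInf x‖ := by
        rw [abs_mul, ← Real.norm_eq_abs (pInf x ℓ)]
        exact mul_le_mul (abs_wght_le x) (PiLp.norm_apply_le _ ℓ) (norm_nonneg _)
          (by positivity)
    _ = (2 * π)⁻¹ * (1 + ‖x‖ ^ 2)⁻¹ * ((√(1 + ‖x‖ ^ 2))⁻¹ * ‖x‖) := by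
        rw [pInf_eq_smul, norm_smul, norm_smul, Real.norm_of_nonneg (by positivity),
          Real.norm_of_nonneg (by positivity)]
        ring
    _ ≤ 1 * (1 + ‖x‖ ^ 2)⁻¹ * 1 := by gcongr; exact inv_two_pi_le_one
    _ = (1 + ‖x‖ ^ 2)⁻¹ := by ring

lemma norm_gradient_pInf_apply_le (ℓ : Fin 2) (x : ℝ²) :
    ‖gradient (fun y => pInf y ℓ) x‖ ≤ (1 + ‖x‖ ^ 2)⁻¹ := by
  set φ : ℝ² → ℝ² := fun y => (1 + ‖y‖ ^ 2)⁻¹ • y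
  have hφ : DifferentiableAt ℝ φ x :=
    ((differentiableAt_const _).add (differentiableAt_id.norm_sq ℝ)).inv
      (by dsimp; positivity) |>.smul differentiableAt_id
  have hproj : ‖(EuclideanSpace.proj ℓ : ℝ² →L[ℝ] ℝ)‖ ≤ 1 :=
    ContinuousLinearMap.opNorm_le_bound _ zero_le_one fun v => by
      simpa using PiLp.norm_apply_le v ℓ
  have hcomp : (fun y => pInf y ℓ) = EuclideanSpace.proj ℓ ∘ ((2 * π)⁻¹ • φ) := by
    funext y
    simp [φ, pInf_eq_smul]
  rw [norm_gradient, hcomp, fderiv_comp x (EuclideanSpace.proj ℓ).differentiableAt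
    (hφ.const_smul _), ContinuousLinearMap.fderiv, fderiv_const_smul hφ]
  calc _ ≤ ‖(EuclideanSpace.proj ℓ : ℝ² →L[ℝ] ℝ)‖ * ((2 * π)⁻¹ * ‖fderiv ℝ φ x‖) := by
        rw [← norm_smul_of_nonneg (by positivity)]
        exact ContinuousLinearMap.opNorm_comp_le _ _
    _ ≤ 1 * ((2 * π)⁻¹ * (3 * (1 + ‖x‖ ^ 2)⁻¹)) := by
        gcongr
        exact norm_fderiv_inv_one_add_norm_sq_smul_le x
    _ ≤ (1 + ‖x‖ ^ 2)⁻¹ := by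
        rw [one_mul, ← mul_assoc]
        refine mul_le_of_le_one_left (by positivity) ?_
        rw [inv_mul_le_iff₀ (by positivity)]
        linarith [pi_gt_three]

theorem stmt14 :
    ∀ ℓ : Fin 2,
      MemLp (fun x : EuclideanSpace ℝ (Fin 2) => wght x * pInf x ℓ) 2 volume
      ∧ MemLp (fun x : EuclideanSpace ℝ (Fin 2) =>
          gradient (fun y => pInf y ℓ) x) 2 volume := by
  intro ℓ
  have hL2 := memLp_two_inv_one_add_norm_sq (volume : Measure ℝ²) (by simp)
  constructor
  · refine hL2.of_le (by unfold wght pInf; fun_prop) (Filter.Eventually.of_forall fun x => ?_)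
    simpa [abs_of_pos (by positivity : (0 : ℝ) < 1 + ‖x‖ ^ 2)]
      using abs_wght_mul_pInf_apply_le x ℓ
  · refine hL2.of_le (measurable_gradient _).aestronglyMeasurable
      (Filter.Eventually.of_forall fun x => ?_)
    simpa [abs_of_pos (by positivity : (0 : ℝ) < 1 + ‖x‖ ^ 2)]
      using norm_gradient_pInf_apply_le ℓ x
end
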